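/- arXiv:1711.05882 — 8 statements merged into one kernel-verified Lean document; each statement's English description precedes it below -/
import Mathlib

section
/- Let A ∈ ℝ^{m×N} and H ∈ ℝ^{r×N}. Then {u ∈ ℝ^N : Au = 0, Hu ≥ 0} = {0} if and only if the following two conditions hold: (i) {u ∈ ℝ^N : Au = 0, Hu = 0} = {0}; and (ii) there exist z ∈ ℝ^m and z' ∈ ℝ^r with all components of z' strictly positive such that AᵀZ = Hᵀz'. -/
/-!
Write `K = {u : Au = 0, Hu ≥ 0}`. Its triviality says exactly that `H` is injective on `ker A` and
that the subspace `U = H(ker A)` of `ℝ^r` meets the nonnegative orthant only in `0`. By Stiemke's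
lemma (strict separation of the compact standard simplex from the closed subspace `U`) the latter
is equivalent to `U` having a strictly positive orthogonal vector `z'`, and `Hᵀz' ⊥ ker A` means
`Hᵀz' ∈ range Aᵀ`. Conversely, for `u ∈ K` we get `z' ⬝ Hu = z ⬝ Au = 0`, which forces `Hu = 0`.
-/

open Matrix

theorem Matrix.exists_transpose_mulVec_eq_of_forall_dotProduct_eq_zero {K m n : Type*} [Field K]
    [Fintype m] [Fintype n] {A : Matrix m n K} {y : n → K}
    (h : ∀ u, A *ᵥ u = 0 → y ⬝ᵥ u = 0) : ∃ z, Aᵀ *ᵥ z = y := by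
  classical
  have hy : dotProductEquiv K n y ∈ (LinearMap.ker A.mulVecLin).dualAnnihilator :=
    (Submodule.mem_dualAnnihilator _).2 fun u hu => h u hu
  rw [← LinearMap.range_dualMap_eq_dualAnnihilator_ker] at hy
  obtain ⟨ψ, hψ⟩ := hy
  set z := (dotProductEquiv K m).symm ψ
  have hz : ∀ v, z ⬝ᵥ v = ψ v := fun v =>
    LinearMap.congr_fun ((dotProductEquiv K m).apply_symm_apply ψ) v
  refine ⟨z, (dotProductEquiv K n).injective (LinearMap.ext fun u => ?_)⟩
  simp only [dotProductEquiv_apply_apply]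
  rw [dotProduct_comm, dotProduct_transpose_mulVec, hz]
  exact LinearMap.congr_fun hψ u

theorem Submodule.exists_pos_forall_dotProduct_eq_zero {ι : Type*} [Fintype ι]
    (U : Submodule ℝ (ι → ℝ)) (hU : ∀ x ∈ U, 0 ≤ x → x = 0) :
    ∃ w : ι → ℝ, (∀ i, 0 < w i) ∧ ∀ x ∈ U, w ⬝ᵥ x = 0 := by
  classical
  have hdisj : Disjoint (stdSimplex ℝ ι) U := by
    refine Set.disjoint_left.2 fun x hx hxU => ?_
    have hx0 : x = 0 := hU x hxU hx.1
    simpa [hx0] using hx.2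
  obtain ⟨f, a, b, hfs, hab, hfU⟩ := geometric_hahn_banach_compact_closed
    (convex_stdSimplex ℝ ι) (isCompact_stdSimplex ℝ ι) U.convex
    U.closed_of_finiteDimensional hdisj
  have hb : b < 0 := by simpa using hfU 0 U.zero_mem
  have hfU0 : ∀ x ∈ U, f x = 0 := by
    intro x hx
    by_contra hfx
    have hscaled := hfU ((b / f x) • x) (U.smul_mem _ hx)
    rw [map_smul, smul_eq_mul, div_mul_cancel₀ _ hfx] at hscaled
    exact lt_irrefl _ hscaled
  set w := (dotProductEquiv ℝ ι).symm f.toLinearMap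
  have hw : ∀ x, w ⬝ᵥ x = f x := fun x =>
    LinearMap.congr_fun ((dotProductEquiv ℝ ι).apply_symm_apply f.toLinearMap) x
  refine ⟨-w, fun i => ?_, fun x hx => by rw [neg_dotProduct, hw, hfU0 x hx, neg_zero]⟩
  have hwi : w i = f (Pi.single i 1) := rfl
  rw [Pi.neg_apply, hwi]
  linarith [hfs _ (single_mem_stdSimplex ℝ i)]

theorem eq_zero_of_dotProduct_eq_zero_of_pos {ι : Type*} [Fintype ι] {w x : ι → ℝ}
    (hw : ∀ i, 0 < w i) (hx : 0 ≤ x) (h : w ⬝ᵥ x = 0) : x = 0 := by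
  funext i
  have hterm := (Finset.sum_eq_zero_iff_of_nonneg fun j _ => mul_nonneg (hw j).le (hx j)).1 h i
    (Finset.mem_univ i)
  exact (mul_eq_zero.1 hterm).resolve_left (hw i).ne'

/-- Lemma 3.2: `{u : Au = 0, Hu ≥ 0} = {0}` iff
(i) `{u : Au = 0, Hu = 0} = {0}` and
(ii) there exist `z` and `z' > 0` with `Aᵀz = Hᵀz'`. -/
theorem dual_lin_constraint
    (m r N : ℕ) (A : Matrix (Fin m) (Fin N) ℝ) (H : Matrix (Fin r) (Fin N) ℝ) :
    ({u : Fin N → ℝ | A.mulVec u = 0 ∧ ∀ i, 0 ≤ H.mulVec u i} = {0}) ↔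
    (({u : Fin N → ℝ | A.mulVec u = 0 ∧ H.mulVec u = 0} = {0}) ∧
      ∃ (z : Fin m → ℝ) (z' : Fin r → ℝ), (∀ i, 0 < z' i) ∧
        A.transpose.mulVec z = H.transpose.mulVec z') := by
  constructor
  · intro h
    have hK : ∀ u, A *ᵥ u = 0 → (∀ i, 0 ≤ (H *ᵥ u) i) → u = 0 := fun u hA hH =>
      h.subset ⟨hA, hH⟩
    refine ⟨Set.eq_singleton_iff_unique_mem.2
      ⟨by simp, fun u ⟨hA, hH⟩ => hK u hA fun i => by simp [hH]⟩, ?_⟩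
    obtain ⟨z', hz', hz'U⟩ :=
      ((LinearMap.ker A.mulVecLin).map H.mulVecLin).exists_pos_forall_dotProduct_eq_zero (by
        rintro _ ⟨u, hu, rfl⟩ hHu
        simp [hK u hu hHu])
    obtain ⟨z, hz⟩ := exists_transpose_mulVec_eq_of_forall_dotProduct_eq_zero
      (y := Hᵀ *ᵥ z') fun u hu => by
        rw [dotProduct_comm, dotProduct_transpose_mulVec]
        exact hz'U _ ⟨u, hu, rfl⟩
    exact ⟨z, z', hz', hz⟩
  · rintro ⟨hi, z, z', hz', hzz⟩
    refine Set.eq_singleton_iff_unique_mem.2 ⟨by simp, fun u ⟨hA, hH⟩ => hi.subset ⟨hA, ?_⟩⟩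
    refine eq_zero_of_dotProduct_eq_zero_of_pos hz' hH ?_
    rw [← dotProduct_transpose_mulVec, ← hzz, dotProduct_transpose_mulVec, hA, dotProduct_zero]
end

section
/- Let f : ℝ^m → ℝ be strictly convex, h : ℝ^N → ℝ be convex, A ∈ ℝ^{m×N}, y ∈ ℝ^m. If the function x ↦ f(Ax − y) + h(x) is constant on a convex set S ⊆ ℝ^N, then Ax = Az and h(x) = h(z) for all x, z ∈ S. -/
/-- If `f` is strictly convex, `h` is convex, and `x ↦ f(Ax − y) + h(x)` is constant
on a convex set `S`, then `Ax = Az` and `h(x) = h(z)` for all `x, z ∈ S`. -/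
theorem constant_on_convex_set
    (m N : ℕ) (f : (Fin m → ℝ) → ℝ) (h : (Fin N → ℝ) → ℝ)
    (A : Matrix (Fin m) (Fin N) ℝ) (y : Fin m → ℝ) (S : Set (Fin N → ℝ))
    (hf : StrictConvexOn ℝ Set.univ f) (hh : ConvexOn ℝ Set.univ h)
    (hS : Convex ℝ S)
    (hconst : ∃ c : ℝ, ∀ x ∈ S, f (A.mulVec x - y) + h x = c) :
    ∀ x ∈ S, ∀ z ∈ S, A.mulVec x = A.mulVec z ∧ h x = h z := by
  obtain ⟨c, hc⟩ := hconst
  intro x hx z hz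
  have hmem : (1/2 : ℝ) • x + (1/2 : ℝ) • z ∈ S := hS hx hz (by norm_num) (by norm_num) (by norm_num)
  have hAw : A.mulVec ((1/2 : ℝ) • x + (1/2 : ℝ) • z) - y
      = (1/2 : ℝ) • (A.mulVec x - y) + (1/2 : ℝ) • (A.mulVec z - y) := by
    rw [Matrix.mulVec_add, Matrix.mulVec_smul, Matrix.mulVec_smul]
    ext i
    simp [Pi.add_apply, Pi.smul_apply, Pi.sub_apply]
    ring
  have hA : A.mulVec x = A.mulVec z := by
    by_contra hne
    have hne' : A.mulVec x - y ≠ A.mulVec z - y := fun hcontra => hne (by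
      have := congrArg (· + y) hcontra
      simpa using this)
    have hflt : f ((1/2 : ℝ) • (A.mulVec x - y) + (1/2 : ℝ) • (A.mulVec z - y))
        < (1/2 : ℝ) * f (A.mulVec x - y) + (1/2 : ℝ) * f (A.mulVec z - y) :=
      hf.2 (Set.mem_univ _) (Set.mem_univ _) hne' (by norm_num) (by norm_num) (by norm_num)
    have hhle : h ((1/2 : ℝ) • x + (1/2 : ℝ) • z)
        ≤ (1/2 : ℝ) * h x + (1/2 : ℝ) * h z :=
      hh.2 (Set.mem_univ _) (Set.mem_univ _) (by norm_num) (by norm_num) (by norm_num)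
    have h1 := hc x hx
    have h2 := hc z hz
    have h3 := hc _ hmem
    rw [hAw] at h3
    nlinarith
  constructor
  · exact hA
  · have h1 := hc x hx
    have h2 := hc z hz
    rw [hA] at h1
    linarith
end

section
/- Let f : ℝ^m → ℝ be strictly convex, h : ℝ^N → ℝ be convex, C ⊆ ℝ^N be a convex set, A ∈ ℝ^{m×N}, y ∈ ℝ^m. Suppose x* minimizes f(Ax − y) + h(x) over C. Then x* is the unique minimizer of f(Ax − y) + h(x) over C if and only if x* is the unique minimizer of h(x) over {x ∈ C : Ax = Ax*}. -/
/-- Proposition 3.6: for strictly convex `f`, convex `h`, and convex `C`, a minimizer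
`x*` of `f(Ax − y) + h(x)` over `C` is the unique minimizer iff `x*` is the unique
minimizer of `h` over `{x ∈ C : Ax = Ax*}`. -/
theorem unique_minimizer_reduction
    (m N : ℕ) (f : (Fin m → ℝ) → ℝ) (h : (Fin N → ℝ) → ℝ)
    (A : Matrix (Fin m) (Fin N) ℝ) (y : Fin m → ℝ) (C : Set (Fin N → ℝ))
    (hf : StrictConvexOn ℝ Set.univ f) (hh : ConvexOn ℝ Set.univ h)
    (hC : Convex ℝ C) (xstar : Fin N → ℝ) (hx : xstar ∈ C)
    (hmin : ∀ x ∈ C, f (A.mulVec xstar - y) + h xstar ≤ f (A.mulVec x - y) + h x) :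
    (∀ x ∈ C, x ≠ xstar → f (A.mulVec xstar - y) + h xstar < f (A.mulVec x - y) + h x) ↔
    ((∀ x ∈ C, A.mulVec x = A.mulVec xstar → h xstar ≤ h x) ∧
      ∀ x ∈ C, A.mulVec x = A.mulVec xstar → x ≠ xstar → h xstar < h x) := by
  constructor
  · intro huniq
    constructor
    · intro x hxC hAx
      have := hmin x hxC
      rw [hAx] at this
      linarith
    · intro x hxC hAx hne
      have := huniq x hxC hne
      rw [hAx] at this
      linarith
  · rintro ⟨hfib, hfibs⟩ x hxC hne
    by_contra hcon
    push_neg at hcon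
    by_cases hA : A.mulVec x = A.mulVec xstar
    · have hs := hfibs x hxC hA hne
      rw [hA] at hcon
      linarith
    · set z := (1/2 : ℝ) • x + (1/2 : ℝ) • xstar with hz
      have hzC : z ∈ C := hC hxC hx (by norm_num) (by norm_num) (by norm_num)
      have hAz : A.mulVec z - y
          = (1/2 : ℝ) • (A.mulVec x - y) + (1/2 : ℝ) • (A.mulVec xstar - y) := by
        rw [hz, Matrix.mulVec_add, Matrix.mulVec_smul, Matrix.mulVec_smul]
        module
      have hne' : A.mulVec x - y ≠ A.mulVec xstar - y := fun hq => hA (sub_left_inj.mp hq)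
      have hfz : f (A.mulVec z - y)
          < (1/2 : ℝ) * f (A.mulVec x - y) + (1/2 : ℝ) * f (A.mulVec xstar - y) := by
        rw [hAz]
        simpa using hf.2 (Set.mem_univ _) (Set.mem_univ _) hne'
          (by norm_num : (0:ℝ) < 1/2) (by norm_num : (0:ℝ) < 1/2) (by norm_num)
      have hhz : h z ≤ (1/2 : ℝ) * h x + (1/2 : ℝ) * h xstar := by
        simpa [hz] using hh.2 (Set.mem_univ x) (Set.mem_univ xstar)
          (by norm_num : (0:ℝ) ≤ 1/2) (by norm_num : (0:ℝ) ≤ 1/2) (by norm_num)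
      have := hmin z hzC
      linarith
end

section
/- Let A ∈ ℝ^{m×N}, let J₁ : ℝ^m → ℝ be coercive and lower semi-continuous, let y ∈ ℝ^m and ε ∈ ℝ, and define D := {x ∈ ℝ^N : J₁(Ax − y) ≤ ε}. Then D = W + N(A), where W := R(Aᵀ) ∩ D, N(A) is the null space of A, R(Aᵀ) is the range of Aᵀ, and moreover W is compact. -/
open scoped Pointwise

open Matrix in
lemma aux_range_eq (m N : ℕ) (A : Matrix (Fin m) (Fin N) ℝ) :
    LinearMap.range (A.mulVecLin ∘ₗ A.transpose.mulVecLin) =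
      LinearMap.range A.mulVecLin := by
  have h := Matrix.mulVecLin_mul A A.transpose
  apply Submodule.eq_of_le_of_finrank_le
  · exact LinearMap.range_comp_le_range A.transpose.mulVecLin A.mulVecLin
  · have h1 : Module.finrank ℝ (LinearMap.range (A.mulVecLin ∘ₗ A.transpose.mulVecLin))
        = (A * A.transpose).rank := by rw [← h]; rfl
    have h2 : Module.finrank ℝ (LinearMap.range A.mulVecLin) = A.rank := rfl
    rw [h1, h2, Matrix.rank_self_mul_transpose]

/-- For coercive lower semicontinuous `J₁`, the sublevel set
`D = {x : J₁(Ax − y) ≤ ε}` decomposes as `D = W + N(A)` with `W = R(Aᵀ) ∩ D`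
compact. -/
theorem sublevel_decomposition
    (m N : ℕ) (A : Matrix (Fin m) (Fin N) ℝ) (J₁ : (Fin m → ℝ) → ℝ)
    (hcoercive : ∀ M : ℝ, ∃ R : ℝ, ∀ u : Fin m → ℝ, R ≤ ‖u‖ → M ≤ J₁ u)
    (hlsc : LowerSemicontinuous J₁)
    (y : Fin m → ℝ) (ε : ℝ) :
    ({x : Fin N → ℝ | J₁ (A.mulVec x - y) ≤ ε} =
        ({x : Fin N → ℝ | ∃ z : Fin m → ℝ, x = A.transpose.mulVec z} ∩
          {x : Fin N → ℝ | J₁ (A.mulVec x - y) ≤ ε}) +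
        {v : Fin N → ℝ | A.mulVec v = 0}) ∧
    IsCompact
      ({x : Fin N → ℝ | ∃ z : Fin m → ℝ, x = A.transpose.mulVec z} ∩
        {x : Fin N → ℝ | J₁ (A.mulVec x - y) ≤ ε}) := by
  -- notation
  set D : Set (Fin N → ℝ) := {x : Fin N → ℝ | J₁ (A.mulVec x - y) ≤ ε} with hD
  set Rg : Set (Fin N → ℝ) := {x : Fin N → ℝ | ∃ z : Fin m → ℝ, x = A.transpose.mulVec z}
    with hRg
  constructor
  · -- decomposition
    ext x
    constructor
    · intro hx
      -- find z with A Aᵀ z = A x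
      have hmem : A.mulVec x ∈ LinearMap.range (A.mulVecLin ∘ₗ A.transpose.mulVecLin) := by
        rw [aux_range_eq]
        exact ⟨x, rfl⟩
      obtain ⟨z, hz⟩ := hmem
      simp only [LinearMap.comp_apply, Matrix.mulVecLin_apply] at hz
      refine ⟨A.transpose.mulVec z, ⟨⟨z, rfl⟩, ?_⟩, x - A.transpose.mulVec z, ?_, show A.transpose.mulVec z + (x - A.transpose.mulVec z) = x by rw [add_comm, sub_add_cancel]⟩
      · show J₁ (A.mulVec (A.transpose.mulVec z) - y) ≤ ε
        rw [hz]; exact hx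
      · show A.mulVec (x - A.transpose.mulVec z) = 0
        rw [Matrix.mulVec_sub, hz, sub_self]
    · rintro ⟨w, ⟨-, hwD⟩, v, hv, rfl⟩
      show J₁ (A.mulVec (w + v) - y) ≤ ε
      rw [Matrix.mulVec_add, hv, add_zero]
      exact hwD
  · -- compactness
    have hRgS : Rg = (LinearMap.range A.transpose.mulVecLin : Submodule ℝ (Fin N → ℝ)) := by
      ext x
      simp only [hRg, Set.mem_setOf_eq, SetLike.mem_coe, LinearMap.mem_range,
        Matrix.mulVecLin_apply]
      exact ⟨fun ⟨z, h⟩ => ⟨z, h.symm⟩, fun ⟨z, h⟩ => ⟨z, h.symm⟩⟩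
    -- closedness
    have hDclosed : IsClosed D := by
      have hcont : Continuous fun x : Fin N → ℝ => A.mulVec x - y := by
        have : Continuous fun x : Fin N → ℝ => A.mulVec x :=
          A.mulVecLin.continuous_of_finiteDimensional
        exact this.sub continuous_const
      have := (hlsc.isClosed_preimage ε).preimage hcont
      exact this
    have hclosed : IsClosed (Rg ∩ D) := by
      refine IsClosed.inter ?_ hDclosed
      rw [hRgS]
      exact (LinearMap.range A.transpose.mulVecLin).closed_of_finiteDimensional
    -- boundedness
    obtain ⟨R, hR⟩ := hcoercive (ε + 1)
    -- antilipschitz on the range of Aᵀ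
    set S : Submodule ℝ (Fin N → ℝ) := LinearMap.range A.transpose.mulVecLin with hS
    have hker : LinearMap.ker (A.mulVecLin ∘ₗ S.subtype) = ⊥ := by
      rw [LinearMap.ker_eq_bot']
      rintro ⟨x, hx⟩ hfx
      obtain ⟨z, rfl⟩ := hx
      have h0 : (A * A.transpose).mulVecLin z = 0 := by
        rw [Matrix.mulVecLin_mul]
        exact hfx
      have : z ∈ LinearMap.ker (A.transpose.mulVecLin) := by
        have hk := Matrix.ker_mulVecLin_transpose_mul_self A.transpose
        rw [Matrix.transpose_transpose] at hk
        rw [← hk]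
        exact h0
      rw [LinearMap.mem_ker, Matrix.mulVecLin_apply] at this
      exact Subtype.ext this
    obtain ⟨K, hK0, hKlip⟩ := (A.mulVecLin ∘ₗ S.subtype).exists_antilipschitzWith hker
    have hbdd : Bornology.IsBounded (Rg ∩ D) := by
      rw [isBounded_iff_forall_norm_le]
      refine ⟨K * (R + ‖y‖), ?_⟩
      rintro x ⟨hxR, hxD⟩
      have hxS : x ∈ S := by
        obtain ⟨z, rfl⟩ := hxR
        exact ⟨z, rfl⟩
      -- bound on ‖A x‖
      have hAx : ‖A.mulVec x - y‖ < R := by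
        by_contra h
        push_neg at h
        have := hR _ h
        have hx' : J₁ (A.mulVec x - y) ≤ ε := hxD
        linarith
      have hAx' : ‖A.mulVec x‖ ≤ R + ‖y‖ := by
        calc ‖A.mulVec x‖ = ‖(A.mulVec x - y) + y‖ := by ring_nf
          _ ≤ ‖A.mulVec x - y‖ + ‖y‖ := norm_add_le _ _
          _ ≤ R + ‖y‖ := by linarith
      have hlip := hKlip.le_mul_dist (⟨x, hxS⟩ : S) 0
      simp only [dist_zero_right, map_zero, dist_zero_right] at hlip
      have hnorm : ‖(⟨x, hxS⟩ : S)‖ = ‖x‖ := rfl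
      have happ : (A.mulVecLin ∘ₗ S.subtype) (⟨x, hxS⟩ : S) = A.mulVec x := rfl
      rw [hnorm, happ] at hlip
      calc ‖x‖ ≤ K * ‖A.mulVec x‖ := hlip
        _ ≤ K * (R + ‖y‖) := by
            exact mul_le_mul_of_nonneg_left hAx' (le_of_lt (by exact_mod_cast hK0))
    exact Metric.isCompact_of_isClosed_isBounded hclosed hbdd
end

section
/- Let E ∈ ℝ^{k×N}, A ∈ ℝ^{m×N}, C ∈ ℝ^{p×N}, y ∈ ℝ^m, d ∈ ℝ^p. If the feasible set {x : Ax = y, Cx ≥ d} is nonempty, then the problem of minimizing ‖Ex‖₁ over this feasible set attains an optimal solution. -/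
/-!
Fourier–Motzkin: eliminating one variable from finitely many linear inequalities leaves finitely
many linear inequalities in the remaining variables. Hence the image of a polyhedron under a linear
map (the projection of its graph) is again a polyhedron, in particular closed. The feasible set is
a polyhedron, so its image under `E` is closed and nonempty, and the continuous, coercive function
`∑ i, |u i|` attains its minimum there; any preimage of a minimiser is optimal.
-/

open Matrix Filter

universe u

def IsPolyhedral {σ : Type u} [Fintype σ] (S : Set (σ → ℝ)) : Prop :=
  ∃ (ι : Type u) (_ : Fintype ι) (G : Matrix ι σ ℝ) (h : ι → ℝ), S = {x | h ≤ G *ᵥ x}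

section

variable {σ τ : Type u} [Fintype σ] [Fintype τ]

theorem isPolyhedral_le_mulVec {ι : Type u} [Fintype ι] (G : Matrix ι σ ℝ) (h : ι → ℝ) :
    IsPolyhedral {x | h ≤ G *ᵥ x} :=
  ⟨ι, inferInstance, G, h, rfl⟩

theorem IsPolyhedral.isClosed {S : Set (σ → ℝ)} (hS : IsPolyhedral S) : IsClosed S := by
  obtain ⟨ι, _, G, h, rfl⟩ := hS
  exact isClosed_le continuous_const (continuous_const.matrix_mulVec continuous_id)

theorem IsPolyhedral.inter {S T : Set (σ → ℝ)} (hS : IsPolyhedral S) (hT : IsPolyhedral T) :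
    IsPolyhedral (S ∩ T) := by
  obtain ⟨ι, _, G, h, rfl⟩ := hS
  obtain ⟨κ, _, G', h', rfl⟩ := hT
  refine ⟨ι ⊕ κ, inferInstance, fromRows G G', Sum.elim h h', ?_⟩
  ext x
  simp [fromRows_mulVec]

theorem IsPolyhedral.preimage {S : Set (σ → ℝ)} (hS : IsPolyhedral S)
    (L : (τ → ℝ) →ₗ[ℝ] σ → ℝ) : IsPolyhedral (L ⁻¹' S) := by
  classical
  obtain ⟨ι, _, G, h, rfl⟩ := hS
  refine ⟨ι, inferInstance, G * LinearMap.toMatrix' L, h, ?_⟩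
  ext x
  simp [← mulVec_mulVec]

theorem isPolyhedral_singleton (v : σ → ℝ) : IsPolyhedral {v} := by
  classical
  refine ⟨σ ⊕ σ, inferInstance, fromRows (-1) 1, Sum.elim (-v) v, ?_⟩
  ext x
  simp [fromRows_mulVec, le_antisymm_iff, neg_mulVec, and_comm]

end

theorem Set.Finite.exists_between_of_forall_le {s u : Set ℝ} (hs : s.Finite) (hu : u.Finite)
    (h : ∀ a ∈ s, ∀ b ∈ u, a ≤ b) : ∃ t, (∀ a ∈ s, a ≤ t) ∧ ∀ b ∈ u, t ≤ b := by
  rcases s.eq_empty_or_nonempty with rfl | hne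
  · obtain ⟨t, ht⟩ := hu.bddBelow
    exact ⟨t, by simp, fun b hb => ht hb⟩
  · exact ⟨sSup s, fun a ha => le_csSup hs.bddAbove ha,
      fun b hb => csSup_le hne fun a ha => h a ha b hb⟩

theorem exists_forall_le_mul_iff {ι : Type*} [Finite ι] (b r : ι → ℝ) :
    (∃ t, ∀ i, r i ≤ b i * t) ↔
      (∀ i, b i = 0 → r i ≤ 0) ∧ ∀ i j, 0 < b i → b j < 0 → b i * r j ≤ b j * r i := by
  constructor
  · rintro ⟨t, ht⟩
    refine ⟨fun i hi => by simpa [hi] using ht i, fun i j hi hj => ?_⟩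
    nlinarith [mul_le_mul_of_nonneg_left (ht j) hi.le, mul_le_mul_of_nonpos_left (ht i) hj.le]
  · rintro ⟨hzero, hpair⟩
    obtain ⟨t, hlow, hupp⟩ := ((Set.toFinite {i | 0 < b i}).image fun i => r i / b i)
      |>.exists_between_of_forall_le ((Set.toFinite {j | b j < 0}).image fun j => r j / b j)
      (by
        rintro _ ⟨i, hi, rfl⟩ _ ⟨j, hj, rfl⟩
        rw [le_div_iff_of_neg hj, div_mul_eq_mul_div, le_div_iff₀ hi]
        linarith [hpair i j hi hj])
    refine ⟨t, fun i => ?_⟩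
    rcases lt_trichotomy (b i) 0 with hi | hi | hi
    · rw [mul_comm, ← le_div_iff_of_neg hi]
      exact hupp _ ⟨i, hi, rfl⟩
    · simpa [hi] using hzero i hi
    · rw [mul_comm, ← div_le_iff₀ hi]
      exact hlow _ ⟨i, hi, rfl⟩

theorem Matrix.mulVec_snoc {ι : Type*} [Fintype ι] {n : ℕ} (G : Matrix ι (Fin (n + 1)) ℝ)
    (x : Fin n → ℝ) (t : ℝ) :
    G *ᵥ Fin.snoc x t = G.submatrix id Fin.castSucc *ᵥ x + t • fun i => G i (Fin.last n) := by
  ext i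
  simp [mulVec, dotProduct, Fin.sum_univ_castSucc, mul_comm]

theorem IsPolyhedral.exists_snoc {n : ℕ} {S : Set (Fin (n + 1) → ℝ)} (hS : IsPolyhedral S) :
    IsPolyhedral {x : Fin n → ℝ | ∃ t, Fin.snoc x t ∈ S} := by
  classical
  obtain ⟨ι, _, G, h, rfl⟩ := hS
  set b : ι → ℝ := fun i => G i (Fin.last n)
  set G' : Matrix ι (Fin n) ℝ := G.submatrix id Fin.castSucc
  have hmem (x : Fin n → ℝ) : (∃ t, h ≤ G *ᵥ Fin.snoc x t) ↔
      ∃ t, ∀ i, (h - G' *ᵥ x) i ≤ b i * t := by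
    refine exists_congr fun t => forall_congr' fun i => ?_
    simp [mulVec_snoc, b, G', mul_comm t, add_comm]
  -- rows not involving the last variable are kept; each pair of rows in which it has opposite
  -- signs is combined so that it cancels
  set pairs := {ij : ι × ι // 0 < b ij.1 ∧ b ij.2 < 0}
  set combined : Matrix pairs (Fin n) ℝ :=
    of fun ij l => b ij.1.1 * G' ij.1.2 l - b ij.1.2 * G' ij.1.1 l
  have hcombined (x : Fin n → ℝ) (ij : pairs) :
      (combined *ᵥ x) ij = b ij.1.1 * (G' *ᵥ x) ij.1.2 - b ij.1.2 * (G' *ᵥ x) ij.1.1 := by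
    simp [combined, mulVec, dotProduct, sub_mul, Finset.sum_sub_distrib, mul_assoc, Finset.mul_sum]
  refine ⟨{i // b i = 0} ⊕ pairs, inferInstance, fromRows (G'.submatrix Subtype.val id) combined,
    Sum.elim (fun i => h i) (fun ij => b ij.1.1 * h ij.1.2 - b ij.1.2 * h ij.1.1), ?_⟩
  ext x
  simp only [Set.mem_ofPred_eq]
  rw [hmem, exists_forall_le_mul_iff]
  simp only [fromRows_mulVec, Pi.le_def, Sum.forall, Sum.elim_inl, Sum.elim_inr, Subtype.forall,
    Pi.sub_apply, sub_nonpos, hcombined]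
  refine and_congr Iff.rfl ⟨fun H ij => ?_, fun H i j hi hj => ?_⟩
  · linarith [H _ _ ij.2.1 ij.2.2]
  · linarith [H ⟨(i, j), hi, hj⟩]

theorem IsPolyhedral.exists_append {k : ℕ} :
    ∀ {N : ℕ} {S : Set (Fin (k + N) → ℝ)}, IsPolyhedral S →
      IsPolyhedral {u : Fin k → ℝ | ∃ z : Fin N → ℝ, Fin.append u z ∈ S}
  | 0, S, hS => by
    have : {u : Fin k → ℝ | ∃ z : Fin 0 → ℝ, Fin.append u z ∈ S} = S := by
      ext u
      simp [Fin.append_right_nil]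
    rwa [this]
  | N + 1, S, hS => by
    convert hS.exists_snoc.exists_append (N := N) using 1
    ext u
    constructor
    · rintro ⟨z, hz⟩
      refine ⟨Fin.init z, z (Fin.last N), ?_⟩
      rwa [← Fin.append_snoc, Fin.snoc_init_self]
    · rintro ⟨z, t, hz⟩
      exact ⟨Fin.snoc z t, by rwa [Fin.append_snoc]⟩

theorem IsPolyhedral.image {k N : ℕ} {S : Set (Fin N → ℝ)} (hS : IsPolyhedral S)
    (L : (Fin N → ℝ) →ₗ[ℝ] Fin k → ℝ) : IsPolyhedral (L '' S) := by
  have hgraph : IsPolyhedral {w : Fin (k + N) → ℝ |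
      w ∘ Fin.natAdd k ∈ S ∧ L (w ∘ Fin.natAdd k) = w ∘ Fin.castAdd N} := by
    convert (hS.preimage (LinearMap.funLeft ℝ ℝ (Fin.natAdd k))).inter
      ((isPolyhedral_singleton 0).preimage
        (L ∘ₗ LinearMap.funLeft ℝ ℝ (Fin.natAdd k) - LinearMap.funLeft ℝ ℝ (Fin.castAdd N)))
    ext w
    simp only [Set.mem_ofPred_eq, Set.mem_inter_iff, Set.mem_preimage, LinearMap.sub_apply,
      LinearMap.coe_comp, Function.comp_apply, Set.mem_singleton_iff, sub_eq_zero]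
    rfl
  convert hgraph.exists_append using 1
  ext u
  have hright (z : Fin N → ℝ) : Fin.append u z ∘ Fin.natAdd k = z := funext (Fin.append_right u z)
  have hleft (z : Fin N → ℝ) : Fin.append u z ∘ Fin.castAdd N = u := funext (Fin.append_left u z)
  simp [hleft, hright]

theorem IsClosed.exists_isMinOn_sum_abs {σ : Type*} [Fintype σ] {T : Set (σ → ℝ)}
    (hT : IsClosed T) (hne : T.Nonempty) : ∃ u ∈ T, IsMinOn (fun v => ∑ i, |v i|) T u := by
  obtain ⟨u₀, hu₀⟩ := hne
  have hnorm_le (v : σ → ℝ) : ‖v‖ ≤ ∑ i, |v i| :=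
    (pi_norm_le_iff_of_nonneg (by positivity)).2 fun i =>
      Finset.single_le_sum (f := fun i => |v i|) (fun j _ => abs_nonneg _) (Finset.mem_univ i)
  have hcoercive : Tendsto (fun v : σ → ℝ => ∑ i, |v i|) (cocompact _) atTop :=
    tendsto_atTop_mono hnorm_le tendsto_norm_cocompact_atTop
  exact (continuous_finsetSum _ fun i _ => (continuous_apply i).abs).continuousOn.exists_isMinOn'
    hT hu₀ ((hcoercive.eventually_ge_atTop _).filter_mono inf_le_left)

/-- The problem `min ‖Ex‖₁ s.t. Ax = y, Cx ≥ d` attains an optimal solution whenever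
it is feasible. -/
theorem BP_like_existence
    (k m p N : ℕ) (E : Matrix (Fin k) (Fin N) ℝ) (A : Matrix (Fin m) (Fin N) ℝ)
    (C : Matrix (Fin p) (Fin N) ℝ) (y : Fin m → ℝ) (d : Fin p → ℝ)
    (hfeas : ∃ x : Fin N → ℝ, A.mulVec x = y ∧ ∀ i, d i ≤ C.mulVec x i) :
    ∃ xstar : Fin N → ℝ, (A.mulVec xstar = y ∧ ∀ i, d i ≤ C.mulVec xstar i) ∧
      ∀ x : Fin N → ℝ, (A.mulVec x = y ∧ ∀ i, d i ≤ C.mulVec x i) →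
        (∑ i, |E.mulVec xstar i|) ≤ ∑ i, |E.mulVec x i| := by
  have hfeasible : IsPolyhedral {x | A *ᵥ x = y ∧ d ≤ C *ᵥ x} :=
    ((isPolyhedral_singleton y).preimage A.mulVecLin).inter (isPolyhedral_le_mulVec C d)
  obtain ⟨x₀, hx₀⟩ := hfeas
  obtain ⟨_, ⟨xstar, hxstar, rfl⟩, hmin⟩ :=
    (hfeasible.image E.mulVecLin).isClosed.exists_isMinOn_sum_abs ⟨_, x₀, hx₀, rfl⟩
  exact ⟨xstar, hxstar, fun x hx => hmin ⟨x, hx, rfl⟩⟩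
end

section
/- Let W = 𝟏 bᵀ + Ŵ E', where 𝟏 ∈ ℝ^r is the all-ones vector, b ∈ ℝ^N, E' ∈ ℝ^{s×N}, and Ŵ ∈ ℝ^{r×s} is a matrix with linearly independent columns such that every row of Ŵ has another row equal to its negation. Then for v ∈ ℝ^N, Wv = 0 if and only if bᵀv = 0 and E'v = 0. -/
/-- Lemma 4.6: for `W = 𝟏bᵀ + Ŵ E'`, where `Ŵ` has linearly independent columns and
every row of `Ŵ` has a negated counterpart, `Wv = 0` iff `bᵀv = 0` and `E'v = 0`. -/
theorem kernel_of_structured_matrix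
    (r s N : ℕ) (hr : 0 < r)
    (b : Fin N → ℝ) (E' : Matrix (Fin s) (Fin N) ℝ)
    (What : Matrix (Fin r) (Fin s) ℝ)
    (hcols : LinearIndependent ℝ (fun j : Fin s => (fun i : Fin r => What i j)))
    (hneg : ∀ i : Fin r, ∃ i' : Fin r, i' ≠ i ∧ ∀ j, What i' j = -(What i j))
    (W : Matrix (Fin r) (Fin N) ℝ)
    (hWdef : ∀ i j, W i j = b j + (What * E') i j)
    (v : Fin N → ℝ) :
    W.mulVec v = 0 ↔ ((∑ j, b j * v j) = 0 ∧ E'.mulVec v = 0) := by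
  set u : Fin s → ℝ := E'.mulVec v with hu
  have key : ∀ i : Fin r, W.mulVec v i = (∑ j, b j * v j) + What.mulVec u i := by
    intro i
    simp only [Matrix.mulVec, dotProduct]
    simp only [hWdef]
    rw [Finset.sum_congr rfl (fun j _ => add_mul (b j) ((What * E') i j) (v j)),
      Finset.sum_add_distrib]
    congr 1
    simp only [hu, Matrix.mul_apply, Matrix.mulVec, dotProduct, Finset.sum_mul]
    rw [Finset.sum_comm]
    exact Finset.sum_congr rfl fun k _ => by
      rw [Finset.mul_sum]; exact Finset.sum_congr rfl fun j _ => by ring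
  constructor
  · intro h
    have h0 : ∀ i, (∑ j, b j * v j) + What.mulVec u i = 0 := by
      intro i; rw [← key i, h]; rfl
    -- first, the scalar is 0
    obtain ⟨i0⟩ : Nonempty (Fin r) := ⟨⟨0, hr⟩⟩
    obtain ⟨i1, _, hneg1⟩ := hneg i0
    have hWu : What.mulVec u i1 = - What.mulVec u i0 := by
      simp only [Matrix.mulVec, dotProduct]
      rw [← Finset.sum_neg_distrib]
      exact Finset.sum_congr rfl (fun j _ => by rw [hneg1 j]; ring)
    have hc : (∑ j, b j * v j) = 0 := by
      have h1 := h0 i0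
      have h2 := h0 i1
      rw [hWu] at h2
      linarith
    have hWu0 : What.mulVec u = 0 := by
      funext i
      have := h0 i
      rw [hc] at this
      simpa using this
    have hu0 : u = 0 := by
      have := Fintype.linearIndependent_iff.mp hcols u ?_
      · funext j; exact this j
      · funext i
        have := congrFun hWu0 i
        simpa [Matrix.mulVec, dotProduct, mul_comm] using this
    exact ⟨hc, hu0⟩
  · rintro ⟨hc, hE⟩
    funext i
    rw [key i, hc, hE]
    simp [Matrix.mulVec]
end

section
/- Let h : ℝ^N → ℝ be convex and g : ℝ^N → ℝ be continuous. Suppose min_x h(x) has nonempty solution set H with γ := inf{g(x) : x ∈ H} > −∞, and let τ ≤ γ. Suppose the problem min{h(x) : g(x) ≤ τ} has a nonempty solution set H_P. Then g(x) = τ for every x ∈ H_P. -/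
open Set Filter Topology

/-- Slackness makes the sublevel set a neighbourhood of `a`, so `a` is a local, hence by convexity
a global, minimizer. -/
theorem ConvexOn.le_of_isMinOn_sublevel_of_lt
    {E β α : Type*} [AddCommGroup E] [TopologicalSpace E] [Module ℝ E] [IsTopologicalAddGroup E]
    [ContinuousSMul ℝ E] [AddCommGroup β] [PartialOrder β] [IsOrderedAddMonoid β]
    [Module ℝ β] [IsOrderedModule ℝ β] [PosSMulReflectLE ℝ β]
    [LinearOrder α] [TopologicalSpace α] [OrderClosedTopology α]
    {f : E → β} {g : E → α} {τ : α} {a : E}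
    (hf : ConvexOn ℝ univ f) (hg : ContinuousAt g a)
    (hmin : IsMinOn f {z | g z ≤ τ} a) (ha : g a < τ) (z : E) : f a ≤ f z :=
  have hnhds : {z | g z ≤ τ} ∈ 𝓝 a :=
    mem_of_superset (hg.eventually_lt continuousAt_const ha) fun _ => le_of_lt
  IsMinOn.of_isLocalMin_of_convex_univ (hmin.isLocalMin hnhds) hf z

theorem constraint_active_at_optimum_general
    (N : ℕ) (h : (Fin N → ℝ) → ℝ) (g : (Fin N → ℝ) → ℝ)
    (hconv : ConvexOn ℝ Set.univ h) (hcont : Continuous g)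
    (H : Set (Fin N → ℝ)) (hHdef : H = {x | ∀ z, h x ≤ h z})
    (γ : ℝ) (hγ : IsGLB (g '' H) γ) (τ : ℝ) (hτ : τ ≤ γ)
    (HP : Set (Fin N → ℝ))
    (hHPdef : HP = {x | g x ≤ τ ∧ ∀ z, g z ≤ τ → h x ≤ h z}) :
    ∀ x ∈ HP, g x = τ := by
  subst hHdef hHPdef
  rintro x ⟨hgx, hopt⟩
  refine hgx.antisymm (not_lt.1 fun hlt => ?_)
  have hxH : ∀ z, h x ≤ h z :=
    hconv.le_of_isMinOn_sublevel_of_lt hcont.continuousAt hopt hlt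
  exact (hγ.1 ⟨x, hxH, rfl⟩).not_gt (hlt.trans_le hτ)

/-- Lemma 5.3: if `τ ≤ inf{g(x) : x ∈ argmin h}`, then every minimizer of `h` over
`{x : g(x) ≤ τ}` satisfies `g(x) = τ`. -/
theorem constraint_active_at_optimum
    (N : ℕ) (h : (Fin N → ℝ) → ℝ) (g : (Fin N → ℝ) → ℝ)
    (hconv : ConvexOn ℝ Set.univ h) (hcont : Continuous g)
    (H : Set (Fin N → ℝ)) (hHdef : H = {x | ∀ z, h x ≤ h z}) (hHne : H.Nonempty)
    (γ : ℝ) (hγ : IsGLB (g '' H) γ) (τ : ℝ) (hτ : τ ≤ γ)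
    (HP : Set (Fin N → ℝ))
    (hHPdef : HP = {x | g x ≤ τ ∧ ∀ z, g z ≤ τ → h x ≤ h z}) (hHPne : HP.Nonempty) :
    ∀ x ∈ HP, g x = τ :=
  constraint_active_at_optimum_general N h g hconv hcont H hHdef γ hγ τ hτ HP hHPdef
end

section
/- Let A ∈ ℝ^{m×N}, y ∈ ℝ^m, and let x* ∈ ℝ^N_+ satisfy Ax* = y. Let S be the support of x*. Then x* is the unique minimizer of ‖x‖₁ over {x : Ax = y, x ≥ 0} if and only if: (i) the columns of A indexed by S are linearly independent, and (ii) there exists u ∈ ℝ^m such that (Aᵀu)_i = 1 for all i ∈ S and (Aᵀu)_i < 1 for all i ∉ S. -/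
/-!
For `x ≥ 0` the objective `‖x‖₁ = ∑ xᵢ` is linear. Given a certificate `u`, every feasible `x ≥ 0`
satisfies `∑ xᵢ - ∑ x*ᵢ = ∑ (1 - (Aᵀu)ᵢ) xᵢ ≥ 0`, with equality only if `x` vanishes off `S`; then
`x - x*` is a kernel vector supported on `S`, so `x = x*` by independence of those columns.

Conversely, moving from `x*` along a direction `v` of the cone `K` of kernel vectors that are
nonnegative off `S` stays feasible, so uniqueness forces `∑ vᵢ > 0` on `K \ {0}`. Applied to `±v`
this gives the independence of the columns on `S`. By compactness, `∑ vᵢ ≥ ε ‖v‖` on `K`, so a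
whole ball around `𝟏` lies in the dual cone of `K`, which by Farkas' lemma is contained in the
closure of the convex cone `{Aᵀu + w | w ≥ 0, w = 0 on S}`. An open subset of the closure of a
convex set in finite dimension lies in the set itself; writing `𝟏 - δ 𝟏_{Sᶜ} = Aᵀu + w` produces
the certificate `u`.
-/

open Matrix Filter Topology Function

theorem Convex.interior_closure_eq_interior {E : Type*} [NormedAddCommGroup E] [NormedSpace ℝ E]
    [FiniteDimensional ℝ E] {s : Set E} (hs : Convex ℝ s) : interior (closure s) = interior s := by
  rcases (interior (closure s)).eq_empty_or_nonempty with h | h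
  · rw [h, eq_comm, ← Set.subset_empty_iff, ← h]
    exact interior_mono subset_closure
  refine hs.interior_closure_eq_interior_of_nonempty_interior ?_
  rw [hs.closure.interior_nonempty_iff_affineSpan_eq_top] at h
  rw [hs.interior_nonempty_iff_affineSpan_eq_top, eq_top_iff, ← h]
  exact affineSpan_le.2 <| closure_minimal (subset_affineSpan ℝ s)
    (affineSpan ℝ s).closed_of_finiteDimensional

theorem exists_pos_mul_norm_le_of_pos {E : Type*} [NormedAddCommGroup E] [NormedSpace ℝ E]
    [FiniteDimensional ℝ E] {K : Set E} (hK : IsClosed K)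
    (hsmul : ∀ v ∈ K, ∀ c : ℝ, 0 ≤ c → c • v ∈ K) (f : E →ₗ[ℝ] ℝ)
    (hf : ∀ v ∈ K, v ≠ 0 → 0 < f v) : ∃ ε > 0, ∀ v ∈ K, ε * ‖v‖ ≤ f v := by
  have hcompact : IsCompact (K ∩ Metric.sphere 0 1) := (isCompact_sphere 0 1).inter_left hK
  obtain ⟨ε, hε, hmin⟩ := hcompact.exists_forall_le' f.continuous_of_finiteDimensional.continuousOn
    fun v hv => hf v hv.1 (ne_zero_of_mem_unit_sphere ⟨v, hv.2⟩)
  refine ⟨ε, hε, fun v hv => ?_⟩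
  rcases eq_or_ne v 0 with rfl | hv0
  · simp
  have hnorm : 0 < ‖v‖ := norm_pos_iff.2 hv0
  have hunit := hmin (‖v‖⁻¹ • v)
    ⟨hsmul v hv _ (inv_nonneg.2 hnorm.le), by simp [norm_smul, hnorm.ne']⟩
  rw [map_smul, smul_eq_mul] at hunit
  rwa [← le_inv_mul_iff₀' hnorm]

section

variable {ι κ : Type*} [Fintype ι]

theorem abs_dotProduct_le (x v : ι → ℝ) : |x ⬝ᵥ v| ≤ Fintype.card ι * (‖x‖ * ‖v‖) := by
  calc |x ⬝ᵥ v| ≤ ∑ i, |x i * v i| := Finset.abs_sum_le_sum_abs _ _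
    _ ≤ ∑ _i : ι, ‖x‖ * ‖v‖ := Finset.sum_le_sum fun i _ => by
        rw [abs_mul]
        exact mul_le_mul (norm_le_pi_norm x i) (norm_le_pi_norm v i) (abs_nonneg _) (norm_nonneg _)
    _ = Fintype.card ι * (‖x‖ * ‖v‖) := by simp

theorem exists_ball_subset_dual {K : Set (ι → ℝ)} (hK : IsClosed K)
    (hsmul : ∀ v ∈ K, ∀ c : ℝ, 0 ≤ c → c • v ∈ K) {c : ι → ℝ}
    (hc : ∀ v ∈ K, v ≠ 0 → 0 < c ⬝ᵥ v) :
    ∃ δ > 0, ∀ b ∈ Metric.ball c δ, ∀ v ∈ K, 0 ≤ b ⬝ᵥ v := by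
  obtain ⟨ε, hε, hcK⟩ := exists_pos_mul_norm_le_of_pos hK hsmul (dotProductBilin ℝ ℝ c) hc
  refine ⟨ε / (Fintype.card ι + 1), by positivity, fun b hb v hv => ?_⟩
  rw [Metric.mem_ball, dist_eq_norm, lt_div_iff₀ (by positivity)] at hb
  have hcv : ε * ‖v‖ ≤ c ⬝ᵥ v := hcK v hv
  have hbc : |(b - c) ⬝ᵥ v| ≤ ε * ‖v‖ := by
    refine (abs_dotProduct_le _ _).trans ?_
    rw [← mul_assoc]
    exact mul_le_mul_of_nonneg_right (by nlinarith [norm_nonneg (b - c)]) (norm_nonneg v)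
  have hsplit : b ⬝ᵥ v = c ⬝ᵥ v + (b - c) ⬝ᵥ v := by rw [sub_dotProduct]; ring
  linarith [neg_abs_le ((b - c) ⬝ᵥ v)]

theorem PointedCone.mem_closure_of_forall_dotProduct_nonneg (D : PointedCone ℝ (ι → ℝ))
    {b : ι → ℝ} (hb : ∀ v, (∀ d ∈ D, 0 ≤ d ⬝ᵥ v) → 0 ≤ b ⬝ᵥ v) :
    b ∈ closure (D : Set (ι → ℝ)) := by
  classical
  by_contra hbD
  obtain ⟨f, hfD, hfb⟩ := ProperCone.hyperplane_separation_point (Submodule.closure D) hbD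
  set v : ι → ℝ := fun i => f fun j => if i = j then 1 else 0
  have hf : ∀ x, f x = x ⬝ᵥ v := fun x => f.toLinearMap.pi_apply_eq_sum_univ x
  rw [hf] at hfb
  exact hfb.not_ge <| hb v fun d hd => hf d ▸ hfD d (subset_closure hd)

theorem exists_pos_nonneg_add_smul {x v : ι → ℝ} (hx : 0 ≤ x) (hv : ∀ i, x i = 0 → 0 ≤ v i) :
    ∃ t : ℝ, 0 < t ∧ 0 ≤ x + t • v := by
  have hev : ∀ i, ∀ᶠ t in 𝓝[>] (0 : ℝ), 0 ≤ x i + t * v i := by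
    intro i
    rcases (hx i).eq_or_lt with hxi | hxi
    · filter_upwards [self_mem_nhdsWithin] with t ht
      rw [← hxi, Pi.zero_apply, zero_add]
      exact mul_nonneg (le_of_lt ht) (hv i hxi.symm)
    · have hcont : Tendsto (fun t : ℝ => x i + t * v i) (𝓝[>] 0) (𝓝 (x i)) :=
        tendsto_nhdsWithin_of_tendsto_nhds <| by
          simpa using ((continuous_id.mul continuous_const).const_add (x i)).tendsto (0 : ℝ)
      exact (hcont.eventually (lt_mem_nhds hxi)).mono fun _ => le_of_lt
  obtain ⟨t, hxt, ht⟩ := ((eventually_all.2 hev).and self_mem_nhdsWithin).exists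
  exact ⟨t, ht, hxt⟩

namespace Matrix

theorem linearIndependent_cols_subtype_iff {R : Type*} [CommRing R] (A : Matrix κ ι R)
    (s : Set ι) : LinearIndependent R (fun i : s => fun j => A j i) ↔
      ∀ v, A *ᵥ v = 0 → (∀ i ∉ s, v i = 0) → v = 0 := by
  classical
  have hcomb : ∀ v : ι → R, (∀ i ∉ s, v i = 0) → ∑ i : s, v i • (fun j => A j i) = A *ᵥ v := by
    intro v hvs
    ext j
    rw [mulVec, dotProduct, ← Fintype.sum_subtype_add_sum_subtype (· ∈ s)]
    simp [fun i : {i // i ∉ s} => hvs i i.2, mul_comm]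
  rw [Fintype.linearIndependent_iff]
  constructor
  · intro h v hAv hvs
    have hv := h (fun i => v i) (by rw [hcomb v hvs, hAv])
    ext i
    by_cases hi : i ∈ s
    · exact hv ⟨i, hi⟩
    · exact hvs i hi
  · intro h g hg i
    have hvs : ∀ i ∉ s, extend Subtype.val g 0 i = 0 := fun i hi =>
      extend_apply' _ _ _ fun ⟨j, hj⟩ => hi (hj ▸ j.2)
    have hv := h _ (by rw [← hcomb _ hvs]; simpa [Subtype.val_injective.extend_apply] using hg) hvs
    simpa [Subtype.val_injective.extend_apply] using congrFun hv i

def feasibleCone (A : Matrix κ ι ℝ) (s : Set ι) : Set (ι → ℝ) :=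
  {v | A *ᵥ v = 0 ∧ ∀ i ∉ s, 0 ≤ v i}

def NonnegNullSpaceProperty (A : Matrix κ ι ℝ) (s : Set ι) : Prop :=
  ∀ v ∈ A.feasibleCone s, v ≠ 0 → 0 < ∑ i, v i

variable {A : Matrix κ ι ℝ} {s : Set ι}

theorem isClosed_feasibleCone : IsClosed (A.feasibleCone s) := by
  simp only [feasibleCone, Set.ofPred_and, Set.ofPred_forall]
  exact (isClosed_eq (continuous_const.matrix_mulVec continuous_id) continuous_const).inter <|
    isClosed_iInter fun i => isClosed_iInter fun _ =>
      isClosed_le continuous_const (continuous_apply i)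

theorem smul_mem_feasibleCone {v : ι → ℝ} (hv : v ∈ A.feasibleCone s) {c : ℝ} (hc : 0 ≤ c) :
    c • v ∈ A.feasibleCone s :=
  ⟨by simp [mulVec_smul, hv.1], fun i hi => mul_nonneg hc (hv.2 i hi)⟩

theorem nonnegNullSpaceProperty_of_forall_sum_lt {x₀ : ι → ℝ} (hx₀ : 0 ≤ x₀)
    (h : ∀ x, A *ᵥ x = A *ᵥ x₀ → 0 ≤ x → x ≠ x₀ → ∑ i, x₀ i < ∑ i, x i) :
    A.NonnegNullSpaceProperty (support x₀) := by
  rintro v ⟨hAv, hvs⟩ hv0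
  obtain ⟨t, ht, hxt⟩ := exists_pos_nonneg_add_smul hx₀ fun i hi => hvs i (notMem_support.2 hi)
  have hlt := h (x₀ + t • v) (by rw [mulVec_add, mulVec_smul, hAv, smul_zero, add_zero]) hxt
    (by simpa [ht.ne'] using hv0)
  simp only [Pi.add_apply, Pi.smul_apply, smul_eq_mul, Finset.sum_add_distrib,
    ← Finset.mul_sum] at hlt
  exact pos_of_mul_pos_right (by linarith) ht.le

theorem NonnegNullSpaceProperty.eq_zero_of_mulVec_eq_zero (h : A.NonnegNullSpaceProperty s)
    {v : ι → ℝ} (hAv : A *ᵥ v = 0) (hvs : ∀ i ∉ s, v i = 0) : v = 0 := by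
  by_contra hv
  have hpos := h v ⟨hAv, fun i hi => (hvs i hi).ge⟩ hv
  have hneg := h (-v) ⟨by rw [mulVec_neg, hAv, neg_zero], fun i hi => by simp [hvs i hi]⟩
    (neg_ne_zero.2 hv)
  simp only [Pi.neg_apply, Finset.sum_neg_distrib, neg_pos] at hneg
  linarith

variable [Fintype κ]

def IsNonnegDualCertificate (A : Matrix κ ι ℝ) (s : Set ι) (u : κ → ℝ) : Prop :=
  (∀ i ∈ s, (Aᵀ *ᵥ u) i = 1) ∧ ∀ i ∉ s, (Aᵀ *ᵥ u) i < 1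

def certificateCone (A : Matrix κ ι ℝ) (s : Set ι) : PointedCone ℝ (ι → ℝ) where
  carrier := {p | ∃ u w, 0 ≤ w ∧ (∀ i ∈ s, w i = 0) ∧ p = Aᵀ *ᵥ u + w}
  add_mem' := by
    rintro _ _ ⟨u, w, hw, hws, rfl⟩ ⟨u', w', hw', hws', rfl⟩
    exact ⟨u + u', w + w', add_nonneg hw hw', fun i hi => by simp [hws i hi, hws' i hi],
      by rw [mulVec_add]; abel⟩
  zero_mem' := ⟨0, 0, le_rfl, fun _ _ => rfl, by simp⟩
  smul_mem' := by
    rintro ⟨c, hc⟩ _ ⟨u, w, hw, hws, rfl⟩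
    exact ⟨c • u, c • w, smul_nonneg hc hw, fun i hi => by simp [hws i hi],
      by simp [mulVec_smul, smul_add]⟩

theorem mem_feasibleCone_of_forall_dotProduct_nonneg {v : ι → ℝ}
    (hv : ∀ d ∈ A.certificateCone s, 0 ≤ d ⬝ᵥ v) : v ∈ A.feasibleCone s := by
  classical
  refine ⟨?_, fun i hi => ?_⟩
  · have h := hv (Aᵀ *ᵥ -(A *ᵥ v)) ⟨-(A *ᵥ v), 0, le_rfl, fun _ _ => rfl, by simp⟩
    rw [mulVec_transpose, ← dotProduct_mulVec, neg_dotProduct, neg_nonneg] at h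
    exact dotProduct_self_eq_zero.1 (le_antisymm h (dotProduct_self_star_nonneg _))
  · have h := hv (Pi.single i 1) ⟨0, Pi.single i 1, Pi.single_nonneg.2 zero_le_one,
      fun j hj => Pi.single_eq_of_ne (by rintro rfl; exact hi hj) _, by simp⟩
    simpa using h

theorem NonnegNullSpaceProperty.exists_ball_one_subset (h : A.NonnegNullSpaceProperty s) :
    ∃ δ > 0, Metric.ball (1 : ι → ℝ) δ ⊆ A.certificateCone s := by
  obtain ⟨δ, hδ, hball⟩ := exists_ball_subset_dual isClosed_feasibleCone
    (fun v hv c hc => smul_mem_feasibleCone hv hc) (c := 1)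
    fun v hv hv0 => by simpa [one_dotProduct] using h v hv hv0
  have hclosure : Metric.ball 1 δ ⊆ closure (A.certificateCone s : Set (ι → ℝ)) := fun b hb =>
    PointedCone.mem_closure_of_forall_dotProduct_nonneg _ fun v hv =>
      hball b hb v (mem_feasibleCone_of_forall_dotProduct_nonneg hv)
  refine ⟨δ, hδ, ?_⟩
  calc Metric.ball 1 δ ⊆ interior (closure (A.certificateCone s : Set (ι → ℝ))) :=
        interior_maximal hclosure Metric.isOpen_ball
    _ = interior (A.certificateCone s) := (PointedCone.convex _).interior_closure_eq_interior
    _ ⊆ _ := interior_subset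

theorem NonnegNullSpaceProperty.exists_isNonnegDualCertificate
    (h : A.NonnegNullSpaceProperty s) : ∃ u, A.IsNonnegDualCertificate s u := by
  classical
  obtain ⟨δ, hδ, hball⟩ := h.exists_ball_one_subset
  set p : ι → ℝ := fun i => if i ∈ s then 1 else 1 - δ / 2
  have hp : p ∈ Metric.ball 1 δ := by
    rw [Metric.mem_ball, dist_eq_norm]
    refine lt_of_le_of_lt ((pi_norm_le_iff_of_nonneg (half_pos hδ).le).2 fun i => ?_)
      (half_lt_self hδ)
    by_cases hi : i ∈ s <;> simp [p, hi, abs_of_pos hδ, (half_pos hδ).le]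
  obtain ⟨u, w, hw, hws, hpu⟩ := hball hp
  refine ⟨u, fun i hi => ?_, fun i hi => ?_⟩
  · have hpi := congrFun hpu i
    simp only [p, hi, if_true, Pi.add_apply, hws i hi, add_zero] at hpi
    exact hpi.symm
  · have hpi := congrFun hpu i
    have hwi : 0 ≤ w i := hw i
    simp only [p, hi, if_false, Pi.add_apply] at hpi
    linarith

theorem IsNonnegDualCertificate.sum_lt_sum {u : κ → ℝ} (hu : A.IsNonnegDualCertificate s u)
    (hA : ∀ v, A *ᵥ v = 0 → (∀ i ∉ s, v i = 0) → v = 0) {x₀ x : ι → ℝ}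
    (hx₀ : ∀ i ∉ s, x₀ i = 0) (hx : 0 ≤ x) (hAx : A *ᵥ x = A *ᵥ x₀) (hne : x ≠ x₀) :
    ∑ i, x₀ i < ∑ i, x i := by
  have hdual : ∑ i, x₀ i = (Aᵀ *ᵥ u) ⬝ᵥ x := by
    calc ∑ i, x₀ i = (Aᵀ *ᵥ u) ⬝ᵥ x₀ := Finset.sum_congr rfl fun i _ => by
          by_cases hi : i ∈ s <;> simp [hu.1 i, hx₀ i, hi]
      _ = (Aᵀ *ᵥ u) ⬝ᵥ x := by
          rw [mulVec_transpose, ← dotProduct_mulVec, ← hAx, dotProduct_mulVec]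
  have hgap : ∑ i, x i - ∑ i, x₀ i = ∑ i, (1 - (Aᵀ *ᵥ u) i) * x i := by
    rw [hdual, dotProduct, ← Finset.sum_sub_distrib]
    exact Finset.sum_congr rfl fun i _ => by ring
  have hslack : ∀ i, (Aᵀ *ᵥ u) i ≤ 1 := fun i => by
    by_cases hi : i ∈ s
    · exact (hu.1 i hi).le
    · exact (hu.2 i hi).le
  obtain ⟨i, hi, hxi⟩ : ∃ i ∉ s, x i ≠ 0 := by
    by_contra! hxs
    exact hne (sub_eq_zero.1 (hA _ (by rw [mulVec_sub, hAx, sub_self]) fun i hi => by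
      simp [hxs i hi, hx₀ i hi]))
  rw [← sub_pos, hgap]
  exact Finset.sum_pos' (fun i _ => mul_nonneg (sub_nonneg.2 (hslack i)) (hx i))
    ⟨i, Finset.mem_univ i, mul_pos (sub_pos.2 (hu.2 i hi)) ((hx i).lt_of_ne' hxi)⟩

end Matrix

end

/-- Corollary 5.5 (nonnegative basis pursuit): a feasible `x* ≥ 0` with `Ax* = y`
is the unique minimizer of `‖x‖₁` over `{x : Ax = y, x ≥ 0}` iff the columns of `A`
on the support `S` of `x*` are linearly independent and there exists `u` with
`(Aᵀu)_S = 𝟏` and `(Aᵀu)_{S^c} < 𝟏`. -/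
theorem nonneg_basis_pursuit_uniqueness
    (m N : ℕ) (A : Matrix (Fin m) (Fin N) ℝ) (y : Fin m → ℝ)
    (xstar : Fin N → ℝ) (hnonneg : ∀ i, 0 ≤ xstar i) (hfeas : A.mulVec xstar = y) :
    (∀ x : Fin N → ℝ, (A.mulVec x = y ∧ ∀ i, 0 ≤ x i) → x ≠ xstar →
        (∑ i, |xstar i|) < ∑ i, |x i|) ↔
    (LinearIndependent ℝ
        (fun i : {i : Fin N // xstar i ≠ 0} => (fun j : Fin m => A j i.1)) ∧
      ∃ u : Fin m → ℝ,
        (∀ i, xstar i ≠ 0 → A.transpose.mulVec u i = 1) ∧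
        (∀ i, xstar i = 0 → A.transpose.mulVec u i < 1)) := by
  have hℓ1 : ∀ x : Fin N → ℝ, 0 ≤ x → ∑ i, |x i| = ∑ i, x i := fun x hx =>
    Finset.sum_congr rfl fun i _ => abs_of_nonneg (hx i)
  subst hfeas
  constructor
  · intro huniq
    have hnsp : A.NonnegNullSpaceProperty (support xstar) :=
      nonnegNullSpaceProperty_of_forall_sum_lt hnonneg fun x hAx hx hne => by
        simpa only [hℓ1 _ hnonneg, hℓ1 _ hx] using huniq x ⟨hAx, hx⟩ hne
    obtain ⟨u, huS, huSc⟩ := hnsp.exists_isNonnegDualCertificate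
    exact ⟨(A.linearIndependent_cols_subtype_iff _).2 fun v hAv hvs =>
      hnsp.eq_zero_of_mulVec_eq_zero hAv hvs, u, huS,
      fun i hi => huSc i (notMem_support.2 hi)⟩
  · rintro ⟨hli, u, huS, huSc⟩ x ⟨hAx, hx⟩ hne
    rw [hℓ1 _ hnonneg, hℓ1 _ hx]
    exact IsNonnegDualCertificate.sum_lt_sum ⟨huS, fun i hi => huSc i (notMem_support.1 hi)⟩
      ((A.linearIndependent_cols_subtype_iff (support xstar)).1 hli)
      (fun i => notMem_support.1) hx hAx hne
end
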